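/- Truncation invariance of the dynamic block: Fix 1 ≤ t < T and suppose (a) for m ∈ {1,2}, R_T^{(m)}(x) = P·R_t^{(m)}(x)·P^⊤ where P = [I_t; 0] (extension consistency), and (b) the normalization scalars satisfy ρ_T([z,0]) = ρ_t(z) for all z ∈ R^{1×t} (padding invariance). Define, at each length ℓ, h_ℓ(x;X) = x·L^{(1)}(x)·X^⊤·R_ℓ^{(1)}(x) ∈ R^{1×ℓ} and o_ℓ(x;X) = σ_ℓ(h_ℓ(x;X))·R_ℓ^{(2)⊤}(x)·X·L^{(2)⊤}(x), where σ_ℓ(z) = (1/ρ_ℓ(z))·ReLU(z). Then for every x ∈ R^{1×d} and every X̃ ∈ R^{T×d}, letting X = P^⊤X̃ be its first t rows, o_T(x; X̃) = o_t(x; X). -/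

import Mathlib

/-!
With `P = [I_t; 0]`, right multiplication by `Pᵀ` zero-pads a row vector and `Pᵀ P = 1`.
Extension consistency makes the length-`T` pre-activation the zero padding of the length-`t`
one; padding commutes with `ReLU` (as `ReLU 0 = 0`) and leaves `ρ` unchanged, so the length-`T`
gate is the padded length-`t` gate, and `Pᵀ P = 1` then cancels the padding against `R_T²`.
-/

open Matrix

section ZeroPad

variable {R : Type*} {t T : ℕ}

def zeroPad [Zero R] (z : Fin t → R) : Fin T → R :=
  fun i => if hi : (i : ℕ) < t then z ⟨i, hi⟩ else 0

theorem comp_zeroPad {S : Type*} [Zero R] [Zero S] (f : R → S) (hf : f 0 = 0) (z : Fin t → R) :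
    f ∘ (zeroPad z : Fin T → R) = zeroPad (f ∘ z) := by
  funext i
  simp only [zeroPad, Function.comp_apply]
  split_ifs <;> simp [hf]

variable [Semiring R] {P : Matrix (Fin T) (Fin t) R}

theorem vecMul_transpose_eq_zeroPad (hP : ∀ i j, P i j = if (i : ℕ) = (j : ℕ) then 1 else 0)
    (z : Fin t → R) : vecMul z Pᵀ = zeroPad z := by
  funext i
  simp only [vecMul, dotProduct, transpose_apply, hP, mul_ite, mul_one, mul_zero, zeroPad]
  split_ifs with hi
  · have hiff (j : Fin t) : (i : ℕ) = j ↔ ⟨i, hi⟩ = j := by rw [Fin.ext_iff]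
    simp [hiff]
  · exact Finset.sum_eq_zero fun j _ => if_neg fun h => hi (by omega)

theorem transpose_mul_eq_one (hle : t ≤ T)
    (hP : ∀ i j, P i j = if (i : ℕ) = (j : ℕ) then 1 else 0) : Pᵀ * P = 1 := by
  ext j k
  simp only [mul_apply, transpose_apply, hP, one_apply]
  rw [Finset.sum_eq_single (Fin.castLE hle j)]
  · simp [Fin.val_inj]
  · intro i _ hi
    rw [if_neg (show (i : ℕ) ≠ j from fun h => hi (Fin.ext h)), zero_mul]
  · simp

end ZeroPad

theorem truncation_invariance_dynamic_block_general {d t T : ℕ} (htT : t < T)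
    (L1 L2 : (Fin d → ℝ) → Matrix (Fin d) (Fin d) ℝ)
    (Rt1 Rt2 : (Fin d → ℝ) → Matrix (Fin t) (Fin t) ℝ)
    (RT1 RT2 : (Fin d → ℝ) → Matrix (Fin T) (Fin T) ℝ)
    (ρt : (Fin t → ℝ) → ℝ) (ρT : (Fin T → ℝ) → ℝ)
    (P : Matrix (Fin T) (Fin t) ℝ)
    (hP : ∀ i j, P i j = if (i : ℕ) = (j : ℕ) then 1 else 0)
    (hpad : ∀ z : Fin t → ℝ,
      ρT (fun i => if hi : (i : ℕ) < t then z ⟨(i : ℕ), hi⟩ else 0) = ρt z)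
    (hext1 : ∀ x, RT1 x = P * Rt1 x * Pᵀ)
    (hext2 : ∀ x, RT2 x = P * Rt2 x * Pᵀ)
    (x : Fin d → ℝ) (Xbig : Matrix (Fin T) (Fin d) ℝ) :
    letI X : Matrix (Fin t) (Fin d) ℝ := Pᵀ * Xbig
    letI hT : Fin T → ℝ :=
      Matrix.vecMul (Matrix.vecMul (Matrix.vecMul x (L1 x)) Xbigᵀ) (RT1 x)
    letI hsmall : Fin t → ℝ :=
      Matrix.vecMul (Matrix.vecMul (Matrix.vecMul x (L1 x)) Xᵀ) (Rt1 x)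
    Matrix.vecMul ((ρT hT)⁻¹ • fun i => max 0 (hT i)) ((RT2 x)ᵀ * Xbig * (L2 x)ᵀ)
      = Matrix.vecMul ((ρt hsmall)⁻¹ • fun i => max 0 (hsmall i))
          ((Rt2 x)ᵀ * X * (L2 x)ᵀ) := by
  set hT := vecMul (vecMul (vecMul x (L1 x)) Xbigᵀ) (RT1 x)
  set hsmall := vecMul (vecMul (vecMul x (L1 x)) (Pᵀ * Xbig)ᵀ) (Rt1 x)
  have h_pad : hT = zeroPad hsmall := by
    simp only [hT, hsmall, hext1, ← vecMul_transpose_eq_zeroPad hP, transpose_mul,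
      transpose_transpose, vecMul_vecMul, Matrix.mul_assoc]
  have hρ : ρT hT = ρt hsmall := h_pad ▸ hpad hsmall
  have hσ : ((ρT hT)⁻¹ • fun i => max 0 (hT i)) =
      vecMul ((ρt hsmall)⁻¹ • fun i => max 0 (hsmall i)) Pᵀ := by
    rw [vecMul_transpose_eq_zeroPad hP, hρ, h_pad]
    exact comp_zeroPad (fun a => (ρt hsmall)⁻¹ * max 0 a) (by simp) hsmall
  rw [hσ, vecMul_vecMul, hext2]
  simp only [transpose_mul, transpose_transpose, ← Matrix.mul_assoc,
    transpose_mul_eq_one htT.le hP, Matrix.one_mul]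

/-- Truncation invariance of the dynamic block: under extension consistency of
the sequence mixings (`R_T = P R_t Pᵀ`, `P = [I_t; 0]`) and padding invariance
of the normalization scalar (`ρ_T([z,0]) = ρ_t(z)`), the length-`T` output on a
history `X̃` equals the length-`t` output on its first `t` rows `X = Pᵀ X̃`,
where `h_ℓ(x;X) = x L¹(x) Xᵀ R_ℓ¹(x)`, `σ_ℓ(z) = ρ_ℓ(z)⁻¹ ReLU(z)`, and
`o_ℓ(x;X) = σ_ℓ(h_ℓ(x;X)) R_ℓ²(x)ᵀ X L²(x)ᵀ`. -/
theorem truncation_invariance_dynamic_block {d t T : ℕ} (ht : 1 ≤ t) (htT : t < T)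
    (L1 L2 : (Fin d → ℝ) → Matrix (Fin d) (Fin d) ℝ)
    (Rt1 Rt2 : (Fin d → ℝ) → Matrix (Fin t) (Fin t) ℝ)
    (RT1 RT2 : (Fin d → ℝ) → Matrix (Fin T) (Fin T) ℝ)
    (ρt : (Fin t → ℝ) → ℝ) (ρT : (Fin T → ℝ) → ℝ)
    (hρt : ∀ z, 0 < ρt z) (hρT : ∀ z, 0 < ρT z)
    (P : Matrix (Fin T) (Fin t) ℝ)
    (hP : ∀ i j, P i j = if (i : ℕ) = (j : ℕ) then 1 else 0)
    (hpad : ∀ z : Fin t → ℝ,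
      ρT (fun i => if hi : (i : ℕ) < t then z ⟨(i : ℕ), hi⟩ else 0) = ρt z)
    (hext1 : ∀ x, RT1 x = P * Rt1 x * Pᵀ)
    (hext2 : ∀ x, RT2 x = P * Rt2 x * Pᵀ)
    (x : Fin d → ℝ) (Xbig : Matrix (Fin T) (Fin d) ℝ) :
    letI X : Matrix (Fin t) (Fin d) ℝ := Pᵀ * Xbig
    letI hT : Fin T → ℝ :=
      Matrix.vecMul (Matrix.vecMul (Matrix.vecMul x (L1 x)) Xbigᵀ) (RT1 x)
    letI hsmall : Fin t → ℝ :=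
      Matrix.vecMul (Matrix.vecMul (Matrix.vecMul x (L1 x)) Xᵀ) (Rt1 x)
    Matrix.vecMul ((ρT hT)⁻¹ • fun i => max 0 (hT i)) ((RT2 x)ᵀ * Xbig * (L2 x)ᵀ)
      = Matrix.vecMul ((ρt hsmall)⁻¹ • fun i => max 0 (hsmall i))
          ((Rt2 x)ᵀ * X * (L2 x)ᵀ) :=
  truncation_invariance_dynamic_block_general htT L1 L2 Rt1 Rt2 RT1 RT2 ρt ρT P hP hpad hext1 hext2
    x Xbig
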